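/- Define Hadamard matrices by H_1 := [1] and H_{2^{n+1}} := [[H_{2^n}, H_{2^n}],[H_{2^n}, -H_{2^n}]], and set Ĥ_{2^n} := 2^{-n/2} H_{2^n}, so that Ĥ_{2^n} is a unitary 2^n × 2^n matrix. Let (d_n)_{n∈ℕ} be any sequence of nonnegative integers, let U be the infinite block-diagonal matrix with blocks Ĥ_{2^{d_1}}, Ĥ_{2^{d_2}}, Ĥ_{2^{d_3}}, …, and let f_k denote the k-th row of U (a sequence indexed by ℕ). Then (f_k)_{k∈ℕ} is an orthonormal basis of ℓ₂(ℕ,ℂ), each f_k belongs to s, and for every q ∈ ℕ (q ≥ 1) and every k ∈ ℕ one has |f_k|_{∞,q} ≤ (|f_k|_{∞,1})^{2q}, where |ξ|_{∞,q} := sup_{j∈ℕ} |ξ_j| j^q. In particular the condition '∃p ∀q ∃r ∃C>0 ∀k: |f_k|_{∞,q} ≤ C·(|f_k|_{∞,p})^r' holds with p = 1, C = 1, r = 2q. -/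

import Mathlib

noncomputable section

/-- Membership in the space `s` of rapidly decreasing sequences (the paper's index
`j ∈ {1,2,...}` corresponds to `j+1` here). -/
def inS (ξ : ℕ → ℂ) : Prop :=
  ∀ q : ℕ, Summable fun j : ℕ => ‖ξ j‖ ^ 2 * ((j : ℝ) + 1) ^ (2 * q)

/-- The sup-norm `|ξ|_{∞,q} = sup_j |ξ_j| (j+1)^q`. -/
def supNorm (q : ℕ) (ξ : ℕ → ℂ) : ℝ :=
  ⨆ j : ℕ, ‖ξ j‖ * ((j : ℝ) + 1) ^ q

/-- The Hadamard matrix `H_{2^n}`, defined recursively by `H_1 = [1]` and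
`H_{2^{n+1}} = [[H_{2^n}, H_{2^n}], [H_{2^n}, -H_{2^n}]]`; `Had n i j` is its `(i,j)`
entry (0-indexed, meaningful for `i, j < 2^n`). -/
def Had : ℕ → ℕ → ℕ → ℝ
  | 0, _, _ => 1
  | n + 1, i, j =>
      if i < 2 ^ n then
        (if j < 2 ^ n then Had n i j else Had n i (j - 2 ^ n))
      else
        (if j < 2 ^ n then Had n (i - 2 ^ n) j else -Had n (i - 2 ^ n) (j - 2 ^ n))

/-- The normalized Hadamard matrix `Ĥ_{2^n} = 2^{-n/2} H_{2^n}`. -/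
def HadHat (n i j : ℕ) : ℝ := Had n i j / Real.sqrt (2 ^ n)

/-- The starting (0-indexed) position `2^{d_1} + ⋯ + 2^{d_n}` of the `n`-th diagonal
block of `U` (blocks numbered from `0`). -/
def blockStart (d : ℕ → ℕ) (n : ℕ) : ℕ := ∑ m ∈ Finset.range n, 2 ^ d m

/-! Each row of `H_{2^{n+1}}` consists of a row of `H_{2^n}` followed by the same row times `±1`,
so by induction the rows of `H_{2^n}` are orthogonal of squared length `2^n`; since `H_{2^n}` is
symmetric, `Ĥ_{2^n}` is an orthogonal involution. Hence the rows of `U` are orthonormal, and a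
vector orthogonal to all of them is annihilated blockwise by `Ĥ`, so it vanishes.
A row in the block `[b, b + N)`, `N = 2^d`, has `N` entries of modulus `N^{-1/2}` and is zero
elsewhere, so `|f_k|_{∞,q} = (b + N)^q / √N`; as `N ≤ b + N` this is at most
`((b + N) / √N)^{2q} = |f_k|_{∞,1}^{2q}`. -/

open Finset

lemma abs_had (n i j : ℕ) : |Had n i j| = 1 := by
  induction n generalizing i j with
  | zero => simp [Had]
  | succ n ih => simp only [Had]; split_ifs <;> simp [ih]

lemma had_symm (n i j : ℕ) : Had n i j = Had n j i := by
  induction n generalizing i j with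
  | zero => rfl
  | succ n ih => simp only [Had]; split_ifs <;> rw [ih]

lemma mod_two_pow_of_lt_two_pow_succ {n i : ℕ} (hi : i < 2 ^ (n + 1)) :
    i % 2 ^ n = if i < 2 ^ n then i else i - 2 ^ n := by
  rw [pow_succ] at hi
  split_ifs with h
  · exact Nat.mod_eq_of_lt h
  · rw [Nat.mod_eq_sub_mod (by omega), Nat.mod_eq_of_lt (by omega)]

lemma had_succ_of_lt {n i j : ℕ} (hi : i < 2 ^ (n + 1)) (hj : j < 2 ^ n) :
    Had (n + 1) i j = Had n (i % 2 ^ n) j := by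
  rw [mod_two_pow_of_lt_two_pow_succ hi]
  simp only [Had, hj, if_true]
  split_ifs <;> rfl

lemma had_succ_two_pow_add {n i : ℕ} (hi : i < 2 ^ (n + 1)) (j : ℕ) :
    Had (n + 1) i (2 ^ n + j) = (if i < 2 ^ n then 1 else -1) * Had n (i % 2 ^ n) j := by
  rw [mod_two_pow_of_lt_two_pow_succ hi]
  simp only [Had, show ¬ 2 ^ n + j < 2 ^ n by omega, if_false, Nat.add_sub_cancel_left]
  split_ifs <;> ring

lemma sum_had_mul_had {n i i' : ℕ} (hi : i < 2 ^ n) (hi' : i' < 2 ^ n) :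
    ∑ j ∈ range (2 ^ n), Had n i j * Had n i' j = if i = i' then (2 ^ n : ℝ) else 0 := by
  induction n generalizing i i' with
  | zero =>
    obtain ⟨rfl, rfl⟩ : i = 0 ∧ i' = 0 := by omega
    simp [Had]
  | succ n ih =>
    set s : ℕ → ℝ := fun i => if i < 2 ^ n then 1 else -1 with hs
    calc ∑ j ∈ range (2 ^ (n + 1)), Had (n + 1) i j * Had (n + 1) i' j
        = ∑ j ∈ range (2 ^ n), Had n (i % 2 ^ n) j * Had n (i' % 2 ^ n) j
          + s i * s i' * ∑ j ∈ range (2 ^ n), Had n (i % 2 ^ n) j * Had n (i' % 2 ^ n) j := by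
          rw [pow_succ, mul_two, sum_range_add, mul_sum]
          congr 1
          · refine sum_congr rfl fun j hj => ?_
            rw [had_succ_of_lt hi (mem_range.1 hj), had_succ_of_lt hi' (mem_range.1 hj)]
          · refine sum_congr rfl fun j _ => ?_
            rw [had_succ_two_pow_add hi, had_succ_two_pow_add hi']
            ring
      _ = (1 + s i * s i') * if i % 2 ^ n = i' % 2 ^ n then (2 ^ n : ℝ) else 0 := by
          rw [ih (Nat.mod_lt _ (by positivity)) (Nat.mod_lt _ (by positivity))]
          ring
      _ = if i = i' then (2 ^ (n + 1) : ℝ) else 0 := by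
          rw [mod_two_pow_of_lt_two_pow_succ hi, mod_two_pow_of_lt_two_pow_succ hi']
          rw [pow_succ] at hi hi' ⊢
          simp only [hs]
          split_ifs <;> first | omega | ring

lemma hadHat_symm (n i j : ℕ) : HadHat n i j = HadHat n j i := by
  rw [HadHat, HadHat, had_symm]

lemma abs_hadHat (n i j : ℕ) : |HadHat n i j| = (√(2 ^ n))⁻¹ := by
  rw [HadHat, abs_div, abs_had, abs_of_nonneg (Real.sqrt_nonneg _), one_div]

lemma sum_hadHat_mul_hadHat {n i i' : ℕ} (hi : i < 2 ^ n) (hi' : i' < 2 ^ n) :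
    ∑ j ∈ range (2 ^ n), HadHat n i j * HadHat n i' j = if i = i' then 1 else 0 := by
  have hsq : √(2 ^ n : ℝ) * √(2 ^ n) = 2 ^ n := Real.mul_self_sqrt (by positivity)
  simp only [HadHat, div_mul_div_comm, hsq, ← sum_div, sum_had_mul_had hi hi']
  split_ifs <;> simp

/-- `Ĥ_{2^n}` is a symmetric orthogonal matrix, hence an involution. -/
lemma sum_hadHat_mul_sum_hadHat_mul {n i : ℕ} (hi : i < 2 ^ n) (v : ℕ → ℂ) :
    ∑ i' ∈ range (2 ^ n), (HadHat n i i' : ℂ) * ∑ j ∈ range (2 ^ n), (HadHat n i' j : ℂ) * v j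
      = v i := by
  calc _ = ∑ j ∈ range (2 ^ n),
        ((∑ i' ∈ range (2 ^ n), HadHat n i i' * HadHat n j i' : ℝ) : ℂ) * v j := by
        simp_rw [mul_sum, Complex.ofReal_sum, sum_mul]
        rw [sum_comm]
        refine sum_congr rfl fun j _ => sum_congr rfl fun i' _ => ?_
        rw [hadHat_symm n i' j]
        push_cast
        ring
    _ = ∑ j ∈ range (2 ^ n), (if i = j then v j else 0) := by
        refine sum_congr rfl fun j hj => ?_
        rw [sum_hadHat_mul_hadHat hi (mem_range.1 hj)]
        split_ifs <;> simp
    _ = v i := by simp [hi]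

section blockStart

variable (d : ℕ → ℕ)

lemma blockStart_succ (n : ℕ) : blockStart d (n + 1) = blockStart d n + 2 ^ d n :=
  sum_range_succ _ _

lemma blockStart_mono : Monotone (blockStart d) := fun _ _ h =>
  sum_le_sum_of_subset (range_subset_range.2 h)

lemma le_blockStart (n : ℕ) : n ≤ blockStart d n := by
  induction n with
  | zero => simp [blockStart]
  | succ n ih => rw [blockStart_succ]; have := Nat.one_le_two_pow (n := d n); omega

variable {d}

lemma blockStart_add_lt {n m i : ℕ} (hi : i < 2 ^ d n) (h : n < m) :
    blockStart d n + i < blockStart d m := by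
  have := blockStart_mono d h
  rw [blockStart_succ] at this
  omega

lemma eq_of_blockStart_add_eq {n n' i i' : ℕ} (hi : i < 2 ^ d n) (hi' : i' < 2 ^ d n')
    (h : blockStart d n + i = blockStart d n' + i') : n = n' := by
  rcases lt_trichotomy n n' with hlt | heq | hgt
  · have := blockStart_add_lt hi hlt; omega
  · exact heq
  · have := blockStart_add_lt hi' hgt; omega

variable (d)

lemma exists_blockStart_add_eq (k : ℕ) : ∃ n, ∃ i < 2 ^ d n, blockStart d n + i = k := by
  classical
  have hex : ∃ n, k < blockStart d (n + 1) := ⟨k, (le_blockStart d (k + 1)).trans_lt' k.lt_succ_self⟩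
  set n := Nat.find hex
  have hlt : k < blockStart d n + 2 ^ d n := blockStart_succ d n ▸ Nat.find_spec hex
  have hle : blockStart d n ≤ k := by
    rcases Nat.eq_zero_or_pos n with h0 | hpos
    · simp [h0, blockStart]
    · have := Nat.find_min hex (m := n - 1) (by omega)
      rwa [Nat.sub_add_cancel hpos, not_lt] at this
  exact ⟨n, k - blockStart d n, by omega, by omega⟩

end blockStart

lemma pow_div_le_div_pow_two_mul {B t : ℝ} (ht : 1 ≤ t) (hB : t ^ 2 ≤ B) (q : ℕ) :
    B ^ q / t ≤ (B / t) ^ (2 * q) := by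
  have ht0 : 0 < t := one_pos.trans_le ht
  have hB0 : 0 ≤ B := (sq_nonneg t).trans hB
  rw [div_pow, div_le_div_iff₀ ht0 (by positivity)]
  calc B ^ q * t ^ (2 * q) = B ^ q * (t ^ 2) ^ q := by rw [← pow_mul]
    _ ≤ B ^ q * B ^ q := by gcongr
    _ = B ^ (2 * q) := by rw [← pow_add, two_mul]
    _ ≤ B ^ (2 * q) * t := le_mul_of_one_le_right (by positivity) ht

/-- `f` is the family of rows of the block-diagonal matrix with blocks `Ĥ_{2^{d n}}`. -/
structure IsHadamardBlockRows (d : ℕ → ℕ) (f : ℕ → ℕ → ℂ) : Prop where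
  apply_blockStart_add : ∀ n : ℕ, ∀ i < 2 ^ d n, ∀ j < 2 ^ d n,
    f (blockStart d n + i) (blockStart d n + j) = (HadHat (d n) i j : ℂ)
  apply_eq_zero : ∀ n : ℕ, ∀ i < 2 ^ d n, ∀ j : ℕ,
    (j < blockStart d n ∨ blockStart d n + 2 ^ d n ≤ j) → f (blockStart d n + i) j = 0

namespace IsHadamardBlockRows

variable {d : ℕ → ℕ} {f : ℕ → ℕ → ℂ} {n i : ℕ}

lemma apply_eq_zero_of_notMem (hf : IsHadamardBlockRows d f) (hi : i < 2 ^ d n) {j : ℕ}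
    (hj : j ∉ Ico (blockStart d n) (blockStart d n + 2 ^ d n)) : f (blockStart d n + i) j = 0 :=
  hf.apply_eq_zero n i hi j (by rw [mem_Ico] at hj; omega)

lemma tsum_conj_mul (hf : IsHadamardBlockRows d f) (hi : i < 2 ^ d n) (ξ : ℕ → ℂ) :
    ∑' j, starRingEnd ℂ (f (blockStart d n + i) j) * ξ j
      = ∑ j ∈ range (2 ^ d n), (HadHat (d n) i j : ℂ) * ξ (blockStart d n + j) := by
  rw [tsum_eq_sum fun j hj => by rw [hf.apply_eq_zero_of_notMem hi hj, map_zero, zero_mul],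
    sum_Ico_eq_sum_range, Nat.add_sub_cancel_left]
  refine sum_congr rfl fun j hj => ?_
  rw [hf.apply_blockStart_add n i hi j (mem_range.1 hj), Complex.conj_ofReal]

lemma inS (hf : IsHadamardBlockRows d f) (k : ℕ) : _root_.inS (f k) := fun _ => by
  obtain ⟨n, i, hi, rfl⟩ := exists_blockStart_add_eq d k
  exact summable_of_ne_finset_zero (s := Ico (blockStart d n) (blockStart d n + 2 ^ d n))
    fun j hj => by simp [hf.apply_eq_zero_of_notMem hi hj]

lemma tsum_conj_mul_eq_ite (hf : IsHadamardBlockRows d f) (k l : ℕ) :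
    ∑' j, starRingEnd ℂ (f k j) * f l j = if k = l then 1 else 0 := by
  obtain ⟨n, i, hi, rfl⟩ := exists_blockStart_add_eq d k
  obtain ⟨n', i', hi', rfl⟩ := exists_blockStart_add_eq d l
  rw [hf.tsum_conj_mul hi]
  by_cases hn : n = n'
  · subst hn
    rw [sum_congr rfl fun j hj => by rw [hf.apply_blockStart_add n i' hi' j (mem_range.1 hj)]]
    simp_rw [← Complex.ofReal_mul]
    rw [← Complex.ofReal_sum, sum_hadHat_mul_hadHat hi hi']
    simp only [add_right_inj]
    split_ifs <;> simp
  · rw [if_neg fun h => hn (eq_of_blockStart_add_eq hi hi' h)]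
    refine sum_eq_zero fun j hj => ?_
    rw [hf.apply_eq_zero_of_notMem hi' fun hmem => ?_, mul_zero]
    rw [mem_Ico] at hmem
    exact hn (eq_of_blockStart_add_eq (mem_range.1 hj)
      (show blockStart d n + j - blockStart d n' < 2 ^ d n' by omega) (by omega))

lemma eq_zero_of_forall_tsum_conj_mul_eq_zero (hf : IsHadamardBlockRows d f) {ξ : ℕ → ℂ}
    (h : ∀ k, ∑' j, starRingEnd ℂ (f k j) * ξ j = 0) : ξ = 0 := by
  funext k
  obtain ⟨n, i, hi, rfl⟩ := exists_blockStart_add_eq d k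
  rw [Pi.zero_apply, ← sum_hadHat_mul_sum_hadHat_mul hi fun j => ξ (blockStart d n + j)]
  refine sum_eq_zero fun i' hi' => ?_
  rw [← hf.tsum_conj_mul (mem_range.1 hi'), h, mul_zero]

lemma norm_apply (hf : IsHadamardBlockRows d f) (hi : i < 2 ^ d n) {j : ℕ}
    (hj : j ∈ Ico (blockStart d n) (blockStart d n + 2 ^ d n)) :
    ‖f (blockStart d n + i) j‖ = (√(2 ^ d n))⁻¹ := by
  rw [mem_Ico] at hj
  obtain ⟨j, rfl⟩ : ∃ j', j = blockStart d n + j' := ⟨j - blockStart d n, by omega⟩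
  rw [hf.apply_blockStart_add n i hi j (by omega), Complex.norm_real, Real.norm_eq_abs,
    abs_hadHat]

/-- The weight `(j+1)^q` is largest at the last entry of the block, where `|f_k j| = 2^{-d/2}`. -/
lemma supNorm_eq (hf : IsHadamardBlockRows d f) (hi : i < 2 ^ d n) (q : ℕ) :
    supNorm q (f (blockStart d n + i))
      = ((blockStart d n + 2 ^ d n : ℕ) : ℝ) ^ q / √(2 ^ d n) := by
  have hle : ∀ j : ℕ, ‖f (blockStart d n + i) j‖ * ((j : ℝ) + 1) ^ q
      ≤ ((blockStart d n + 2 ^ d n : ℕ) : ℝ) ^ q / √(2 ^ d n) := by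
    intro j
    by_cases hj : j ∈ Ico (blockStart d n) (blockStart d n + 2 ^ d n)
    · rw [hf.norm_apply hi hj, inv_mul_eq_div]
      rw [mem_Ico] at hj
      gcongr
      exact_mod_cast (by omega : j + 1 ≤ blockStart d n + 2 ^ d n)
    · rw [hf.apply_eq_zero_of_notMem hi hj, norm_zero, zero_mul]
      positivity
  have hlast : blockStart d n + 2 ^ d n - 1 + 1 = blockStart d n + 2 ^ d n := by
    have := Nat.one_le_two_pow (n := d n); omega
  refine le_antisymm (ciSup_le hle) (le_ciSup_of_le ⟨_, Set.forall_mem_range.2 hle⟩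
    (blockStart d n + 2 ^ d n - 1) (le_of_eq ?_))
  rw [hf.norm_apply hi (by rw [mem_Ico]; omega), inv_mul_eq_div, ← Nat.cast_add_one, hlast]

lemma supNorm_le_supNorm_one_pow (hf : IsHadamardBlockRows d f) (q k : ℕ) :
    supNorm q (f k) ≤ supNorm 1 (f k) ^ (2 * q) := by
  obtain ⟨n, i, hi, rfl⟩ := exists_blockStart_add_eq d k
  rw [hf.supNorm_eq hi, hf.supNorm_eq hi, pow_one]
  apply pow_div_le_div_pow_two_mul (Real.one_le_sqrt.2 (one_le_pow₀ one_le_two))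
  rw [Real.sq_sqrt (by positivity)]
  push_cast
  linarith [(blockStart d n).cast_nonneg (α := ℝ)]

end IsHadamardBlockRows

/-- Let `(d_n)` be nonnegative integers and let `f_k` be the `k`-th row of the infinite
block-diagonal matrix `U` with blocks `Ĥ_{2^{d_n}}` (the hypotheses `hblock`, `hzero`
say exactly that `f` is the family of rows of `U`). Then the rows of each `Ĥ_{2^n}` are
orthonormal (`Ĥ_{2^n}` is unitary), each `f_k ∈ s`, `(f_k)` is an orthonormal basis of
`ℓ₂(ℕ,ℂ)`, and `|f_k|_{∞,q} ≤ (|f_k|_{∞,1})^{2q}` for all `q ≥ 1` and `k`; in particular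
`∃ p, ∀ q, ∃ r, ∃ C > 0, ∀ k, |f_k|_{∞,q} ≤ C (|f_k|_{∞,p})^r` holds with
`p = 1`, `C = 1`, `r = 2q`. -/
theorem stmt_18 (d : ℕ → ℕ) (f : ℕ → ℕ → ℂ)
    (hblock : ∀ n : ℕ, ∀ i < 2 ^ d n, ∀ j < 2 ^ d n,
      f (blockStart d n + i) (blockStart d n + j) = (HadHat (d n) i j : ℂ))
    (hzero : ∀ n : ℕ, ∀ i < 2 ^ d n, ∀ j : ℕ,
      (j < blockStart d n ∨ blockStart d n + 2 ^ d n ≤ j) → f (blockStart d n + i) j = 0) :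
    (∀ n : ℕ, ∀ i < 2 ^ n, ∀ i' < 2 ^ n,
      (∑ j ∈ Finset.range (2 ^ n), HadHat n i j * HadHat n i' j) =
        if i = i' then 1 else 0) ∧
    (∀ k, inS (f k)) ∧
    (∀ k l : ℕ,
      (∑' j : ℕ, (starRingEnd ℂ) (f k j) * f l j) = if k = l then 1 else 0) ∧
    (∀ ξ : ℕ → ℂ, Summable (fun j : ℕ => ‖ξ j‖ ^ 2) →
      (∀ k : ℕ, (∑' j : ℕ, (starRingEnd ℂ) (f k j) * ξ j) = 0) → ξ = 0) ∧
    (∀ q : ℕ, 1 ≤ q → ∀ k : ℕ, supNorm q (f k) ≤ supNorm 1 (f k) ^ (2 * q)) ∧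
    (∃ p : ℕ, ∀ q : ℕ, ∃ r : ℕ, ∃ C : ℝ, 0 < C ∧
      ∀ k : ℕ, supNorm q (f k) ≤ C * supNorm p (f k) ^ r) := by
  have hf : IsHadamardBlockRows d f := ⟨hblock, hzero⟩
  refine ⟨fun n i hi i' hi' => sum_hadHat_mul_hadHat hi hi', hf.inS, hf.tsum_conj_mul_eq_ite,
    fun ξ _ => hf.eq_zero_of_forall_tsum_conj_mul_eq_zero, fun q _ => hf.supNorm_le_supNorm_one_pow q,
    1, fun q => ⟨2 * q, 1, one_pos, fun k => ?_⟩⟩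
  rw [one_mul]
  exact hf.supNorm_le_supNorm_one_pow q k

end
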